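/- arXiv:1811.03350 — 4 statements merged into one kernel-verified Lean document; each statement's English description precedes it below -/
import Mathlib

section
/- Suppose A_{jj} = 0 and A_{jk}A_{ki} = 1 implies A_{ji} = 0 (no Δ-cliques with apex j), and let O_j = {k : A_{jk} = 1} be nonempty. Restrict the system ẋ_m = x_m F_m(x) (with F as in the simplex construction) to the subspace Q_j = {x : x_m = 0 unless m = j or m ∈ O_j}. Define Φ_j by tan Φ_j = x_j² / Σ_{i∈O_j} x_i². Then along solutions in Q_j \ {0}, dΦ_j/dt = −2 x_j² Σ_{i∈O_j} x_i² (η x_i² + ε x_j²) / ([Σ_{i∈O_j} x_i²]² + x_j⁴), which is ≤ 0, and is strictly negative unless x_i = 0 for all i ∈ O_j or x_j = 0. -/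
/-! With `a = x_j²` and `S = Σ_{i∈O_j} x_i²`, `dΦ_j/dt = (a' S - a S') / (S² + a²)`. Each square
grows at twice its coordinate's per-capita rate, and the rate of `x_j` minus the rate of `x_i`
(`i ∈ O_j`) is `-(η x_i² + ε x_j²)`, so the numerator is `-2 a Σ_{i∈O_j} x_i² (η x_i² + ε a)`,
a sum of nonnegative terms that is positive as soon as `x_j` and some `x_i` are nonzero. -/

open Finset Real

theorem HasDerivAt.arctan_div {u v : ℝ → ℝ} {u' v' t : ℝ} (hu : HasDerivAt u u' t)
    (hv : HasDerivAt v v' t) (hvt : v t ≠ 0) :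
    HasDerivAt (fun s => Real.arctan (u s / v s))
      ((u' * v t - u t * v') / (v t ^ 2 + u t ^ 2)) t := by
  refine (hu.fun_div hv hvt).arctan.congr_deriv ?_
  field_simp

theorem HasDerivAt.sq_of_eq_self_mul {f : ℝ → ℝ} {r t : ℝ} (hf : HasDerivAt f (f t * r) t) :
    HasDerivAt (fun s => f s ^ 2) (2 * r * f t ^ 2) t := by
  refine (hf.fun_pow 2).congr_deriv ?_
  push_cast
  ring

section AngularRate

variable {ι : Type*} (O : Finset ι) (x : ι → ℝ) (y : ℝ) {ε η : ℝ}

theorem angular_rate_nonpos (hε : 0 ≤ ε) (hη : 0 ≤ η) :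
    -2 * y ^ 2 * (∑ i ∈ O, x i ^ 2 * (η * x i ^ 2 + ε * y ^ 2)) /
      ((∑ i ∈ O, x i ^ 2) ^ 2 + y ^ 4) ≤ 0 := by
  have hsum : 0 ≤ ∑ i ∈ O, x i ^ 2 * (η * x i ^ 2 + ε * y ^ 2) :=
    sum_nonneg fun i _ => by positivity
  apply div_nonpos_of_nonpos_of_nonneg _ (by positivity)
  nlinarith [sq_nonneg y]

theorem angular_rate_neg (hε : 0 < ε) (hη : 0 ≤ η) (hx : ∃ i ∈ O, x i ≠ 0) (hy : y ≠ 0) :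
    -2 * y ^ 2 * (∑ i ∈ O, x i ^ 2 * (η * x i ^ 2 + ε * y ^ 2)) /
      ((∑ i ∈ O, x i ^ 2) ^ 2 + y ^ 4) < 0 := by
  obtain ⟨i, hi, hxi⟩ := hx
  have hsum : 0 < ∑ i ∈ O, x i ^ 2 * (η * x i ^ 2 + ε * y ^ 2) :=
    sum_pos' (fun k _ => by positivity) ⟨i, hi, by positivity⟩
  apply div_neg_of_neg_of_pos _ (by positivity)
  have : 0 < y ^ 2 := by positivity
  nlinarith

end AngularRate

theorem angular_decrease_general {n : ℕ} (ε η : ℝ) (hε : 0 < ε) (hη : 0 < η)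
    (j : Fin n) (O : Finset (Fin n))
    (x : ℝ → Fin n → ℝ)
    (hxj : ∀ t : ℝ, HasDerivAt (fun s => x s j)
      (x t j * (1 - (∑ k ∈ O, (η + 1) * (x t k) ^ 2) - (x t j) ^ 2)) t)
    (hxi : ∀ t : ℝ, ∀ i ∈ O, HasDerivAt (fun s => x s i)
      (x t i * (1 + (ε - 1) * (x t j) ^ 2 - (∑ k ∈ O.erase i, (η + 1) * (x t k) ^ 2)
        - (x t i) ^ 2)) t)
    (Φ : ℝ → ℝ) (hΦ : ∀ t, Φ t = arctan ((x t j) ^ 2 / ∑ i ∈ O, (x t i) ^ 2)) :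
    ∀ t : ℝ, (∑ i ∈ O, (x t i) ^ 2) ≠ 0 →
      HasDerivAt Φ
        (-2 * (x t j) ^ 2 * (∑ i ∈ O, (x t i) ^ 2 * (η * (x t i) ^ 2 + ε * (x t j) ^ 2)) /
          ((∑ i ∈ O, (x t i) ^ 2) ^ 2 + (x t j) ^ 4)) t ∧
      (-2 * (x t j) ^ 2 * (∑ i ∈ O, (x t i) ^ 2 * (η * (x t i) ^ 2 + ε * (x t j) ^ 2)) /
          ((∑ i ∈ O, (x t i) ^ 2) ^ 2 + (x t j) ^ 4) ≤ 0) ∧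
      (¬ ((∀ i ∈ O, x t i = 0) ∨ x t j = 0) →
        -2 * (x t j) ^ 2 * (∑ i ∈ O, (x t i) ^ 2 * (η * (x t i) ^ 2 + ε * (x t j) ^ 2)) /
          ((∑ i ∈ O, (x t i) ^ 2) ^ 2 + (x t j) ^ 4) < 0) := by
  intro t hS
  refine ⟨?_, angular_rate_nonpos O (x t) (x t j) hε.le hη.le, fun h => ?_⟩
  · have hv := HasDerivAt.fun_sum fun i hi => (hxi t i hi).sq_of_eq_self_mul
    rw [funext hΦ]
    convert HasDerivAt.arctan_div (hxj t).sq_of_eq_self_mul hv hS using 1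
    congr 1
    · simp only [mul_sum, ← sum_sub_distrib]
      refine sum_congr rfl fun i hi => ?_
      rw [sum_erase_eq_sub hi]
      ring
    · ring
  · push Not at h
    exact angular_rate_neg O (x t) (x t j) hε hη.le h.1 h.2

/-- On the invariant subspace `Q_j` of the simplex construction (no
1-cycles, 2-cycles or Δ-cliques with apex `j`), the angular function `Φ_j` with
`tan Φ_j = x_j² / Σ_{i∈O_j} x_i²` satisfies
`dΦ_j/dt = −2 x_j² Σ_{i∈O_j} x_i² (η x_i² + ε x_j²) / ([Σ_{i∈O_j} x_i²]² + x_j⁴) ≤ 0`,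
with strict negativity unless `x_i = 0` for all `i ∈ O_j` or `x_j = 0`. -/
theorem angular_decrease {n : ℕ} (ε η : ℝ) (hε : 0 < ε) (hε1 : ε < 1) (hη : 0 < η)
    (j : Fin n) (O : Finset (Fin n)) (hO : O.Nonempty) (hjO : j ∉ O)
    (x : ℝ → Fin n → ℝ)
    (hQ : ∀ t : ℝ, ∀ m : Fin n, m ≠ j → m ∉ O → x t m = 0)
    (hxj : ∀ t : ℝ, HasDerivAt (fun s => x s j)
      (x t j * (1 - (∑ k ∈ O, (η + 1) * (x t k) ^ 2) - (x t j) ^ 2)) t)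
    (hxi : ∀ t : ℝ, ∀ i ∈ O, HasDerivAt (fun s => x s i)
      (x t i * (1 + (ε - 1) * (x t j) ^ 2 - (∑ k ∈ O.erase i, (η + 1) * (x t k) ^ 2)
        - (x t i) ^ 2)) t)
    (Φ : ℝ → ℝ) (hΦ : ∀ t, Φ t = arctan ((x t j) ^ 2 / ∑ i ∈ O, (x t i) ^ 2)) :
    ∀ t : ℝ, (∑ i ∈ O, (x t i) ^ 2) ≠ 0 →
      HasDerivAt Φ
        (-2 * (x t j) ^ 2 * (∑ i ∈ O, (x t i) ^ 2 * (η * (x t i) ^ 2 + ε * (x t j) ^ 2)) /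
          ((∑ i ∈ O, (x t i) ^ 2) ^ 2 + (x t j) ^ 4)) t ∧
      (-2 * (x t j) ^ 2 * (∑ i ∈ O, (x t i) ^ 2 * (η * (x t i) ^ 2 + ε * (x t j) ^ 2)) /
          ((∑ i ∈ O, (x t i) ^ 2) ^ 2 + (x t j) ^ 4) ≤ 0) ∧
      (¬ ((∀ i ∈ O, x t i = 0) ∨ x t j = 0) →
        -2 * (x t j) ^ 2 * (∑ i ∈ O, (x t i) ^ 2 * (η * (x t i) ^ 2 + ε * (x t j) ^ 2)) /
          ((∑ i ∈ O, (x t i) ^ 2) ^ 2 + (x t j) ^ 4) < 0) :=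
  angular_decrease_general ε η hε hη j O x hxj hxi Φ hΦ
end

section
/- Let O ⊂ {1,...,n} be nonempty and consider the vector field on Ω = {x ∈ ℝ^n : x_k = 0 for k ∉ O} given by ẋ_i = x_i(1 − R − η Σ_{k∈O, k≠i} x_k²) for i ∈ O, where R = Σ_{k∈O} x_k² and η > 0. Define V(x) = −R/2 + R²/4 + (η/4) Σ_{k∈O} x_k² Σ_{l∈O, l≠k} x_l². Then for every i ∈ O and x ∈ Ω, −∂V/∂x_i = x_i(1 − R) − η x_i Σ_{k∈O, k≠i} x_k², i.e., the restricted flow is the negative gradient flow of V. -/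
/-! On the line through `x` in direction `e_i` the potential is a quartic in `s = x_i`:
the cross term is `(∑ u)² − ∑ u²` with `u_k = x_k²`, so it equals `(s² + A)² − (s⁴ + Q)`
for constants `A`, `Q`. Differentiating in `s` gives the claimed formula. -/

open Finset

lemma Finset.sum_mul_sum_erase {ι R : Type*} [DecidableEq ι] [CommRing R]
    (s : Finset ι) (u : ι → R) :
    ∑ k ∈ s, u k * ∑ l ∈ s.erase k, u l = (∑ k ∈ s, u k) ^ 2 - ∑ k ∈ s, u k ^ 2 := by
  have h : ∀ k ∈ s, u k * ∑ l ∈ s.erase k, u l = u k * ∑ l ∈ s, u l - u k ^ 2 := by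
    intro k hk
    rw [sum_erase_eq_sub hk]
    ring
  rw [sum_congr rfl h, sum_sub_distrib, ← sum_mul]
  ring

lemma Finset.sum_comp_update_of_mem {ι α M : Type*} [DecidableEq ι] [AddCommMonoid M]
    {s : Finset ι} {i : ι} (hi : i ∈ s) (f : α → M) (x : ι → α) (a : α) :
    ∑ k ∈ s, f (Function.update x i a k) = f a + ∑ k ∈ s.erase i, f (x k) := by
  simp_rw [Function.apply_update (fun _ => f) x i a]
  rw [sum_update_of_mem hi, sdiff_singleton_eq_erase]

section Potential

variable {ι : Type*} [DecidableEq ι]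

noncomputable def potential (η : ℝ) (O : Finset ι) (x : ι → ℝ) : ℝ :=
  -(∑ k ∈ O, (x k) ^ 2) / 2 + (∑ k ∈ O, (x k) ^ 2) ^ 2 / 4 +
    η / 4 * ∑ k ∈ O, (x k) ^ 2 * ∑ l ∈ O.erase k, (x l) ^ 2

lemma potential_update {O : Finset ι} {i : ι} (hi : i ∈ O) (η : ℝ) (x : ι → ℝ) (s : ℝ) :
    potential η O (Function.update x i s) =
      -(s ^ 2 + ∑ k ∈ O.erase i, x k ^ 2) / 2 + (s ^ 2 + ∑ k ∈ O.erase i, x k ^ 2) ^ 2 / 4 +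
        η / 4 * ((s ^ 2 + ∑ k ∈ O.erase i, x k ^ 2) ^ 2 - (s ^ 4 + ∑ k ∈ O.erase i, x k ^ 4)) := by
  have hsq : ∀ t : ℝ, (t ^ 2) ^ 2 = t ^ 4 := fun t => by ring
  rw [potential, sum_mul_sum_erase O (fun k => Function.update x i s k ^ 2)]
  simp only [hsq, sum_comp_update_of_mem hi (· ^ 2), sum_comp_update_of_mem hi (· ^ 4)]

lemma hasDerivAt_quartic (η A Q s : ℝ) :
    HasDerivAt (fun t : ℝ => -(t ^ 2 + A) / 2 + (t ^ 2 + A) ^ 2 / 4 +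
        η / 4 * ((t ^ 2 + A) ^ 2 - (t ^ 4 + Q)))
      (-s + s * (s ^ 2 + A) + η * s * A) s := by
  have h2 : HasDerivAt (fun t : ℝ => t ^ 2 + A) (2 * s) s := by
    simpa using (hasDerivAt_pow 2 s).add_const A
  have h4 : HasDerivAt (fun t : ℝ => t ^ 4 + Q) (4 * s ^ 3) s := by
    simpa using (hasDerivAt_pow 4 s).add_const Q
  refine ((h2.neg.div_const 2).add ((h2.pow 2).div_const 4)).add
    (((h2.pow 2).sub h4).const_mul (η / 4)) |>.congr_deriv ?_
  push_cast
  ring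

lemma hasDerivAt_potential_update {O : Finset ι} {i : ι} (hi : i ∈ O) (η : ℝ) (x : ι → ℝ) :
    HasDerivAt (fun s : ℝ => potential η O (Function.update x i s))
      (-(x i * (1 - ∑ k ∈ O, (x k) ^ 2) - η * x i * ∑ k ∈ O.erase i, (x k) ^ 2)) (x i) := by
  have hR : ∑ k ∈ O, x k ^ 2 = x i ^ 2 + ∑ k ∈ O.erase i, x k ^ 2 :=
    (add_sum_erase O _ hi).symm
  simp_rw [potential_update hi]
  convert hasDerivAt_quartic η _ _ (x i) using 1
  rw [hR]
  ring

end Potential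

theorem gradient_flow_on_Omega_general {n : ℕ} (η : ℝ)
    (O : Finset (Fin n))
    (V : (Fin n → ℝ) → ℝ)
    (hV : ∀ x : Fin n → ℝ, V x =
      -(∑ k ∈ O, (x k) ^ 2) / 2 + (∑ k ∈ O, (x k) ^ 2) ^ 2 / 4 +
        η / 4 * ∑ k ∈ O, (x k) ^ 2 * ∑ l ∈ O.erase k, (x l) ^ 2) :
    ∀ i ∈ O, ∀ x : Fin n → ℝ, (∀ k, k ∉ O → x k = 0) →
      HasDerivAt (fun s : ℝ => V (Function.update x i s))
        (-(x i * (1 - ∑ k ∈ O, (x k) ^ 2) - η * x i * ∑ k ∈ O.erase i, (x k) ^ 2))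
        (x i) := by
  intro i hi x _
  obtain rfl : V = potential η O := funext hV
  exact hasDerivAt_potential_update hi η x

/-- On the coordinate subspace `Ω` indexed by a nonempty `O`, the
vector field `ẋ_i = x_i(1 − R − η Σ_{k≠i} x_k²)` is the negative gradient flow of
`V(x) = −R/2 + R²/4 + (η/4) Σ_{k∈O} x_k² Σ_{l∈O, l≠k} x_l²`:
`−∂V/∂x_i = x_i(1 − R) − η x_i Σ_{k∈O, k≠i} x_k²` for every `i ∈ O` and `x ∈ Ω`. -/
theorem gradient_flow_on_Omega {n : ℕ} (η : ℝ) (hη : 0 < η)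
    (O : Finset (Fin n)) (hO : O.Nonempty)
    (V : (Fin n → ℝ) → ℝ)
    (hV : ∀ x : Fin n → ℝ, V x =
      -(∑ k ∈ O, (x k) ^ 2) / 2 + (∑ k ∈ O, (x k) ^ 2) ^ 2 / 4 +
        η / 4 * ∑ k ∈ O, (x k) ^ 2 * ∑ l ∈ O.erase k, (x l) ^ 2) :
    ∀ i ∈ O, ∀ x : Fin n → ℝ, (∀ k, k ∉ O → x k = 0) →
      HasDerivAt (fun s : ℝ => V (Function.update x i s))
        (-(x i * (1 - ∑ k ∈ O, (x k) ^ 2) - η * x i * ∑ k ∈ O.erase i, (x k) ^ 2))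
        (x i) :=
  gradient_flow_on_Omega_general η O V hV
end

section
/- Let η > 0, let O be a nonempty finite index set, and let V(x) = −R/2 + R²/4 + (η/4) Σ_{k∈O} x_k² Σ_{l∈O, l≠k} x_l², with R = Σ_{k∈O} x_k², be defined on ℝ^O. Then the local minima of V are exactly the points ±e_i, i ∈ O (the points with one coordinate equal to ±1 and all others zero), and V(±e_i) = −1/4. -/
/-!
In the variables `u = x²` the potential becomes
`W(u) = -S/2 + (1 + η) S²/4 - η ‖u‖²/4` with `S = ∑ u_k`, and a local minimum of `V` at `x`
gives a local minimum of `W` on the nonnegative orthant at `x²`. Moving mass `t` from `u_j` to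
`u_i` keeps `S` and changes `W` by `-η/2 (t² + t (u_i - u_j))`, so at a local minimum at most one
coordinate is positive; on the ray `t e_i` we have `W = (t - 1)²/4 - 1/4`, which forces
`u = e_i`. Conversely the cross term of `V` is nonnegative, so `V ≥ (R - 1)²/4 - 1/4 ≥ -1/4`,
with equality at `±e_i`: these are global minima.
-/

open Finset Set Filter Topology Function

theorem Fintype.sum_comp_update {ι α M : Type*} [Fintype ι] [DecidableEq ι] [AddCommGroup M]
    (g : α → M) (u : ι → α) (i : ι) (a : α) :
    ∑ k, g (update u i a k) = ∑ k, g (u k) - g (u i) + g a := by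
  simp_rw [apply_update (fun _ => g)]
  rw [sum_update_of_mem (mem_univ i), sdiff_singleton_eq_erase, sum_erase_eq_sub (mem_univ i)]
  abel

theorem IsLocalMinOn.not_eventually_lt {X β : Type*} [TopologicalSpace X] [Preorder β]
    {f : X → β} {s : Set X} {γ : ℝ → X} (hmin : IsLocalMinOn f s (γ 0))
    (hγ : ContinuousAt γ 0) (hs : ∀ᶠ t in 𝓝[>] 0, γ t ∈ s) :
    ¬ ∀ᶠ t in 𝓝[>] 0, f (γ t) < f (γ 0) := by
  intro hlt
  have hle := hmin.comp_tendsto (tendsto_nhdsWithin_iff.2 ⟨hγ.mono_left nhdsWithin_le_nhds, hs⟩)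
  obtain ⟨t, hle, hlt⟩ := (hle.and hlt).exists
  exact hlt.not_ge hle

theorem isLocalMinOn_Ici_of_isLocalMin_comp_sq {ι β : Type*} [Fintype ι] [Preorder β]
    {f : (ι → ℝ) → β} {x : ι → ℝ} (hmin : IsLocalMin (fun y : ι → ℝ => f fun k => y k ^ 2) x) :
    IsLocalMinOn f (Ici 0) (fun k => x k ^ 2) := by
  -- `r` is a continuous right inverse of squaring on the orthant that takes `x²` back to `x`.
  set r : (ι → ℝ) → ι → ℝ := fun u k => (if 0 ≤ x k then 1 else -1) * √(u k)
  have hr : Continuous r := by fun_prop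
  have hsq : ∀ u ∈ Ici (0 : ι → ℝ), (fun k => r u k ^ 2) = u := fun u hu => by
    ext k
    rw [mul_pow, Real.sq_sqrt (hu k)]
    split_ifs <;> ring
  have hrx : r (fun k => x k ^ 2) = x := by
    ext k
    simp only [r, Real.sqrt_sq_eq_abs]
    split_ifs with hk
    · rw [abs_of_nonneg hk, one_mul]
    · rw [abs_of_neg (not_le.1 hk), neg_one_mul, neg_neg]
  have hmin' := (hrx ▸ hmin).comp_continuous hr.continuousAt
  filter_upwards [nhdsWithin_le_nhds hmin', self_mem_nhdsWithin] with u hu hu0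
  simpa only [comp_apply, hsq u hu0, hsq _ (fun k => sq_nonneg (x k))] using hu

theorem Pi.exists_eq_single_of_pairwise {ι M : Type*} [DecidableEq ι] [Nonempty ι] [Zero M]
    {u : ι → M} (h : ∀ i j, i ≠ j → u i = 0 ∨ u j = 0) : ∃ i, u = Pi.single i (u i) := by
  by_cases hu : ∃ i, u i ≠ 0
  · obtain ⟨i, hi⟩ := hu
    refine ⟨i, funext fun k => ?_⟩
    rcases eq_or_ne k i with rfl | hk
    · rw [Pi.single_eq_same]
    · rw [Pi.single_eq_of_ne hk, (h i k hk.symm).resolve_left hi]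
  · push Not at hu
    obtain ⟨i⟩ := ‹Nonempty ι›
    exact ⟨i, funext fun k => by simp [hu]⟩

theorem sq_eq_single_one_iff {ι : Type*} [DecidableEq ι] {x : ι → ℝ} {i : ι} :
    (fun k => x k ^ 2) = Pi.single i 1 ↔ (x i = 1 ∨ x i = -1) ∧ ∀ k, k ≠ i → x k = 0 := by
  simp only [funext_iff, Pi.single_apply]
  constructor
  · intro h
    exact ⟨sq_eq_one_iff.1 (by simpa using h i), fun k hk => by simpa [hk] using h k⟩
  · rintro ⟨hi, hk⟩ k
    split_ifs with hki
    · subst hki; exact sq_eq_one_iff.2 hi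
    · simp [hk k hki]

variable {ι : Type*} [Fintype ι] [DecidableEq ι]

/-- The potential `V` as a function of the squares `u_k = x_k²`. -/
noncomputable def orthantPotential (η : ℝ) (u : ι → ℝ) : ℝ :=
  -(∑ k, u k) / 2 + (∑ k, u k) ^ 2 / 4 + η / 4 * ∑ k, u k * ∑ l ∈ univ.erase k, u l

theorem orthantPotential_eq (η : ℝ) (u : ι → ℝ) :
    orthantPotential η u =
      -(∑ k, u k) / 2 + (1 + η) * (∑ k, u k) ^ 2 / 4 - η * (∑ k, u k ^ 2) / 4 := by
  have hcross : ∑ k, u k * ∑ l ∈ univ.erase k, u l = (∑ k, u k) ^ 2 - ∑ k, u k ^ 2 := by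
    simp_rw [sum_erase_eq_sub (mem_univ _), mul_sub, sum_sub_distrib, ← sum_mul, ← sq]
  rw [orthantPotential, hcross]
  ring

theorem neg_quarter_le_orthantPotential {η : ℝ} (hη : 0 ≤ η) {u : ι → ℝ} (hu : 0 ≤ u) :
    -1 / 4 ≤ orthantPotential η u := by
  have hcross : 0 ≤ η / 4 * ∑ k, u k * ∑ l ∈ univ.erase k, u l :=
    mul_nonneg (by positivity)
      (sum_nonneg fun k _ => mul_nonneg (hu k) (sum_nonneg fun l _ => hu l))
  rw [orthantPotential]
  nlinarith [sq_nonneg (∑ k, u k - 1)]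

theorem orthantPotential_single (η : ℝ) (i : ι) (t : ℝ) :
    orthantPotential η (Pi.single i t) = -t / 2 + t ^ 2 / 4 := by
  have hsq : (fun k => Pi.single i t k ^ 2) = Pi.single (M := fun _ => ℝ) i (t ^ 2) :=
    funext fun k => by rcases eq_or_ne k i with rfl | hk <;> simp [*]
  rw [orthantPotential_eq, hsq, sum_pi_single', sum_pi_single', if_pos (Finset.mem_univ i),
    if_pos (Finset.mem_univ i)]
  ring

theorem orthantPotential_transfer (η : ℝ) (u : ι → ℝ) {i j : ι} (hij : i ≠ j) (t : ℝ) :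
    orthantPotential η (update (update u i (u i + t)) j (u j - t)) =
      orthantPotential η u - η / 2 * (t ^ 2 + t * (u i - u j)) := by
  simp only [orthantPotential_eq, Fintype.sum_comp_update (fun s : ℝ => s),
    Fintype.sum_comp_update (· ^ 2),
    update_of_ne hij.symm]
  ring

theorem IsLocalMinOn.orthantPotential_eq_zero_or_eq_zero {η : ℝ} (hη : 0 < η) {u : ι → ℝ}
    (hmin : IsLocalMinOn (orthantPotential η) (Ici 0) u) (hu : 0 ≤ u) {i j : ι} (hij : i ≠ j) :
    u i = 0 ∨ u j = 0 := by
  wlog hji : u j ≤ u i generalizing i j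
  · exact (this hij.symm (le_of_not_ge hji)).symm
  by_contra! hpos
  have hj : 0 < u j := (hu j).lt_of_ne' hpos.2
  set γ : ℝ → ι → ℝ := fun t => update (update u i (u i + t)) j (u j - t)
  have hγ0 : γ 0 = u := by simp [γ]
  refine (hγ0 ▸ hmin).not_eventually_lt (by fun_prop) ?_ ?_
  · filter_upwards [Ioo_mem_nhdsGT hj] with t ht k
    simp only [γ, update_apply, Pi.zero_apply]
    split_ifs
    · linarith [ht.2]
    · linarith [hu i, ht.1]
    · exact hu k
  · filter_upwards [self_mem_nhdsWithin] with t (ht : 0 < t)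
    rw [hγ0, orthantPotential_transfer η u hij]
    have hgain : 0 < t ^ 2 + t * (u i - u j) :=
      add_pos_of_pos_of_nonneg (pow_pos ht 2) (mul_nonneg ht.le (sub_nonneg.2 hji))
    nlinarith [mul_pos hη hgain]

theorem IsLocalMinOn.orthantPotential_single_eq_one {η : ℝ} {i : ι} {r : ℝ}
    (hmin : IsLocalMinOn (orthantPotential η) (Ici 0) (Pi.single i r)) (hr : 0 ≤ r) : r = 1 := by
  by_contra hr1
  set γ : ℝ → ι → ℝ := fun s => Pi.single i (r + s * (1 - r))
  have hγ0 : γ 0 = Pi.single i r := by simp [γ]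
  refine (hγ0 ▸ hmin).not_eventually_lt ((continuous_single i).comp (by fun_prop)).continuousAt
    ?_ ?_
  · filter_upwards [Ioo_mem_nhdsGT one_pos] with s hs
    exact Pi.single_nonneg.2 (by nlinarith [hs.1, hs.2])
  · filter_upwards [Ioo_mem_nhdsGT two_pos] with s hs
    have hsq : 0 < (1 - r) ^ 2 := by positivity [sub_ne_zero.2 (Ne.symm hr1)]
    simp only [γ, orthantPotential_single]
    nlinarith [mul_pos (mul_pos hs.1 (sub_pos.2 hs.2)) hsq]

theorem IsLocalMinOn.orthantPotential_eq_single_one [Nonempty ι] {η : ℝ} (hη : 0 < η)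
    {u : ι → ℝ} (hmin : IsLocalMinOn (orthantPotential η) (Ici 0) u) (hu : 0 ≤ u) :
    ∃ i, u = Pi.single i 1 := by
  obtain ⟨i, hi⟩ := Pi.exists_eq_single_of_pairwise fun i j =>
    hmin.orthantPotential_eq_zero_or_eq_zero hη hu
  exact ⟨i, hi.trans (congrArg _ ((hi ▸ hmin).orthantPotential_single_eq_one (hu i)))⟩

/-- For `η > 0`, the local minima of
`V(x) = −R/2 + R²/4 + (η/4) Σ_k x_k² Σ_{l≠k} x_l²` (with `R = Σ_k x_k²`) on
`ℝ^O` (here `O = Fin n`, `n ≥ 1`) are exactly the points `±e_i`, and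
`V(±e_i) = −1/4`. -/
theorem local_minima_of_V {n : ℕ} (hn : 1 ≤ n) (η : ℝ) (hη : 0 < η)
    (V : (Fin n → ℝ) → ℝ)
    (hV : ∀ x : Fin n → ℝ, V x =
      -(∑ k, (x k) ^ 2) / 2 + (∑ k, (x k) ^ 2) ^ 2 / 4 +
        η / 4 * ∑ k, (x k) ^ 2 * ∑ l ∈ Finset.univ.erase k, (x l) ^ 2) :
    (∀ x : Fin n → ℝ, IsLocalMin V x ↔
      ∃ i : Fin n, (x i = 1 ∨ x i = -1) ∧ ∀ k : Fin n, k ≠ i → x k = 0) ∧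
    (∀ i : Fin n, V (Pi.single i 1) = -1/4 ∧ V (Pi.single i (-1)) = -1/4) := by
  have hVW : ∀ x, V x = orthantPotential η fun k => x k ^ 2 := hV
  have : Nonempty (Fin n) := ⟨⟨0, hn⟩⟩
  have hV_eq_of_sq : ∀ {x : Fin n → ℝ} {i : Fin n}, (fun k => x k ^ 2) = Pi.single i 1 →
      V x = -1 / 4 := fun hx => by
    rw [hVW, hx, orthantPotential_single]
    norm_num
  refine ⟨fun x => ?_, fun i => ⟨hV_eq_of_sq (i := i) ?_, hV_eq_of_sq (i := i) ?_⟩⟩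
  · simp_rw [← sq_eq_single_one_iff]
    constructor
    · intro hmin
      rw [funext hVW] at hmin
      exact (isLocalMinOn_Ici_of_isLocalMin_comp_sq hmin).orthantPotential_eq_single_one hη
        fun k => sq_nonneg (x k)
    · rintro ⟨i, hx⟩
      refine Eventually.of_forall fun y => ?_
      rw [hV_eq_of_sq hx, hVW]
      exact neg_quarter_le_orthantPotential hη.le fun k => sq_nonneg (y k)
  all_goals exact sq_eq_single_one_iff.2 ⟨by simp, fun k hk => Pi.single_eq_of_ne hk _⟩
end

section
/- For the Kirk–Silber realization with 0 < ε < 1 and η > 0, on the invariant subspace Ω₂ = {(0,0,x₃,x₄)} the ω-limit set of every initial condition with x₃x₄ ≠ 0 and max(|x₃|,|x₄|) ≠ min(|x₃|,|x₄|) is one of the four sinks (±1,0), (0,±1); initial conditions on the diagonals x₃² = x₄² (excluding the origin) converge to one of the saddles ζ with x₃² = x₄² = 1/(2+η). -/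
/-!
Squaring forgets the signs: `u = x₃²`, `v = x₄²` solve the competitive Lotka–Volterra system
`u' = 2u(1 - u - (1+η)v)`, `v' = 2v(1 - v - (1+η)u)`, while each of `x₃`, `x₄` and `u - v`
solves a linear equation `w' = a(t) w` and so never changes sign.

On a diagonal `u = v` for all time and `u` solves the logistic equation
`u' = 2u(1 - (2+η)u)`, hence tends to `1/(2+η)`. Off the diagonal, say `v < u`, one has
`(log (v/u))' = -2η(u - v) < 0`; two-sided bounds on `u` for `t ≥ 0` keep `u - v` above a
positive constant, so `log (v/u) → -∞` and `v → 0`. Then `u` solves a logistic equation perturbed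
by a vanishing term and tends to `1`.
-/

open Filter Topology

theorem continuous_of_forall_hasDerivAt {f f' : ℝ → ℝ} (hf : ∀ t, HasDerivAt f (f' t) t) :
    Continuous f :=
  continuous_iff_continuousAt.2 fun t => (hf t).continuousAt

section LinearODE

variable {x a : ℝ → ℝ}

theorem exists_eq_mul_exp_of_hasDerivAt_mul (ha : Continuous a)
    (hx : ∀ t, HasDerivAt x (x t * a t) t) : ∃ A : ℝ → ℝ, ∀ t, x t = x 0 * Real.exp (A t) := by
  set A : ℝ → ℝ := fun t => ∫ s in (0 : ℝ)..t, a s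
  have hA (t : ℝ) : HasDerivAt A (a t) t := (ha.integral_hasStrictDerivAt 0 t).hasDerivAt
  have hconst (t : ℝ) : x t * Real.exp (-A t) = x 0 * Real.exp (-A 0) :=
    is_const_of_deriv_eq_zero (f := fun t => x t * Real.exp (-A t))
      (fun s => ((hx s).mul (hA s).neg.exp).differentiableAt)
      (fun s => ((hx s).mul (hA s).neg.exp).deriv.trans (by ring)) t 0
  refine ⟨A, fun t => ?_⟩
  have := hconst t
  simp only [A, intervalIntegral.integral_same, neg_zero, Real.exp_zero, mul_one] at this
  rw [← this, mul_assoc, ← Real.exp_add, neg_add_cancel, Real.exp_zero, mul_one]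

theorem mul_pos_of_hasDerivAt_mul (ha : Continuous a) (hx : ∀ t, HasDerivAt x (x t * a t) t)
    (h0 : x 0 ≠ 0) (t : ℝ) : 0 < x 0 * x t := by
  obtain ⟨A, hA⟩ := exists_eq_mul_exp_of_hasDerivAt_mul ha hx
  rw [hA t, ← mul_assoc]
  exact mul_pos (mul_self_pos.2 h0) (Real.exp_pos _)

theorem eq_zero_of_hasDerivAt_mul (ha : Continuous a) (hx : ∀ t, HasDerivAt x (x t * a t) t)
    (h0 : x 0 = 0) (t : ℝ) : x t = 0 := by
  obtain ⟨A, hA⟩ := exists_eq_mul_exp_of_hasDerivAt_mul ha hx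
  rw [hA t, h0, zero_mul]

end LinearODE

section Asymptotics

variable {f f' : ℝ → ℝ}

theorem tendsto_atBot_of_hasDerivAt_le_neg {δ : ℝ} (hf : ∀ t, HasDerivAt f (f' t) t)
    (hδ : 0 < δ) (h : ∀ᶠ t in atTop, f' t ≤ -δ) : Tendsto f atTop atBot := by
  obtain ⟨T, hT⟩ := eventually_atTop.1 h
  have hB (s : ℝ) : HasDerivAt (fun s => f T + -δ * (s - T)) (-δ) s :=
    ((((hasDerivAt_id s).sub_const T).const_mul (-δ)).const_add (f T)).congr_deriv (by ring)
  have hle (t : ℝ) (ht : T ≤ t) : f t ≤ f T + -δ * (t - T) :=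
    image_le_of_deriv_right_le_deriv_boundary (fun s _ => (hf s).continuousAt.continuousWithinAt)
      (fun s _ => (hf s).hasDerivWithinAt) (by simp)
      (fun s _ => (hB s).continuousAt.continuousWithinAt) (fun s _ => (hB s).hasDerivWithinAt)
      (fun s hs => hT s hs.1) ⟨ht, le_rfl⟩
  refine tendsto_atBot_mono' atTop (eventually_atTop.2 ⟨T, hle⟩) ?_
  refine tendsto_atBot_add_const_left _ _ (Tendsto.const_mul_atTop_of_neg (by linarith) ?_)
  exact tendsto_atTop_add_const_right _ _ tendsto_id

theorem le_of_hasDerivAt_neg_of_eq {T M : ℝ} (hf : ∀ t, HasDerivAt f (f' t) t) (hT : f T ≤ M)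
    (h : ∀ t ≥ T, f t = M → f' t < 0) {t : ℝ} (ht : T ≤ t) : f t ≤ M :=
  image_le_of_deriv_right_lt_deriv_boundary (fun s _ => (hf s).continuousAt.continuousWithinAt)
    (fun s _ => (hf s).hasDerivWithinAt) hT (fun _ => hasDerivAt_const _ M)
    (fun s hs => h s hs.1) ⟨ht, le_rfl⟩

theorem ge_of_hasDerivAt_pos_of_eq {T m : ℝ} (hf : ∀ t, HasDerivAt f (f' t) t) (hT : m ≤ f T)
    (h : ∀ t ≥ T, f t = m → 0 < f' t) {t : ℝ} (ht : T ≤ t) : m ≤ f t := by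
  have := le_of_hasDerivAt_neg_of_eq (f := -f) (M := -m) (fun t => (hf t).neg)
    (by simpa using hT) (fun s hs hs' => by simpa using h s hs (by simpa using hs')) ht
  simpa using this

theorem eventually_le_of_hasDerivAt_le_neg {δ M : ℝ} (hf : ∀ t, HasDerivAt f (f' t) t)
    (hδ : 0 < δ) (h : ∀ᶠ t in atTop, M ≤ f t → f' t ≤ -δ) : ∀ᶠ t in atTop, f t ≤ M := by
  obtain ⟨T, hT⟩ := eventually_atTop.1 h
  obtain ⟨T₁, hT₁, hfT₁⟩ : ∃ T₁ ≥ T, f T₁ ≤ M := by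
    by_contra! hgt
    have : Tendsto f atTop atBot := tendsto_atBot_of_hasDerivAt_le_neg hf hδ
      (eventually_atTop.2 ⟨T, fun t ht => hT t ht (hgt t ht).le⟩)
    obtain ⟨t, hlt, ht⟩ :=
      ((this.eventually (eventually_lt_atBot M)).and (eventually_ge_atTop T)).exists
    exact (hgt t ht).not_gt hlt
  exact eventually_atTop.2 ⟨T₁, fun t ht => le_of_hasDerivAt_neg_of_eq hf hfT₁
    (fun s hs hs' => (hT s (hT₁.trans hs) hs'.ge).trans_lt (neg_neg_of_pos hδ)) ht⟩

theorem eventually_ge_of_hasDerivAt_ge_pos {δ m : ℝ} (hf : ∀ t, HasDerivAt f (f' t) t)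
    (hδ : 0 < δ) (h : ∀ᶠ t in atTop, f t ≤ m → δ ≤ f' t) : ∀ᶠ t in atTop, m ≤ f t := by
  have := eventually_le_of_hasDerivAt_le_neg (f := -f) (M := -m) (fun t => (hf t).neg) hδ
    (h.mono fun t ht hm => by simpa using ht (by simpa using hm))
  exact this.mono fun t ht => by simpa using ht

theorem tendsto_of_hasDerivAt_of_attracting {c : ℝ} (hf : ∀ t, HasDerivAt f (f' t) t)
    (h : ∀ ε > 0, ∃ δ > 0, ∀ᶠ t in atTop,
      (c + ε ≤ f t → f' t ≤ -δ) ∧ (f t ≤ c - ε → δ ≤ f' t)) :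
    Tendsto f atTop (𝓝 c) := by
  refine tendsto_order.2 ⟨fun b hb => ?_, fun b hb => ?_⟩
  · obtain ⟨δ, hδ, hev⟩ := h ((c - b) / 2) (by linarith)
    filter_upwards [eventually_ge_of_hasDerivAt_ge_pos hf hδ (hev.mono fun t ht => ht.2)]
      with t ht
    linarith
  · obtain ⟨δ, hδ, hev⟩ := h ((b - c) / 2) (by linarith)
    filter_upwards [eventually_le_of_hasDerivAt_le_neg hf hδ (hev.mono fun t ht => ht.1)]
      with t ht
    linarith

-- In the variable `log u` the equation reads `(log u)' = a - b exp (log u) - g`, which pushes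
-- `log u` towards `log (a / b)` at a uniform rate, with no lower bound on `u` needed.
theorem tendsto_of_hasDerivAt_logistic {u g : ℝ → ℝ} {a b : ℝ} (ha : 0 < a) (hb : 0 < b)
    (hpos : ∀ t, 0 < u t) (hu : ∀ t, HasDerivAt u (u t * (a - b * u t - g t)) t)
    (hg : Tendsto g atTop (𝓝 0)) : Tendsto u atTop (𝓝 (a / b)) := by
  have hlog (t : ℝ) : HasDerivAt (fun t => Real.log (u t)) (a - b * u t - g t) t :=
    ((hu t).log (hpos t).ne').congr_deriv (mul_div_cancel_left₀ _ (hpos t).ne')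
  have hexp (t : ℝ) : Real.exp (Real.log (u t)) = u t := Real.exp_log (hpos t)
  have hab : Real.exp (Real.log (a / b)) = a / b := Real.exp_log (div_pos ha hb)
  suffices Tendsto (fun t => Real.log (u t)) atTop (𝓝 (Real.log (a / b))) by
    have := (Real.continuous_exp.tendsto _).comp this
    rw [hab] at this
    exact this.congr fun t => hexp t
  refine tendsto_of_hasDerivAt_of_attracting hlog fun ε hε => ?_
  set δ := a * (1 - Real.exp (-ε)) / 2 with hδ_def
  have hδ : 0 < δ := by
    have := Real.exp_lt_one_iff.2 (neg_lt_zero.2 hε)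
    positivity
  -- `1 - exp (-ε) ≤ ε ≤ exp ε - 1`, so `δ` also bounds the pull from above.
  have hε₁ : 1 - Real.exp (-ε) ≤ Real.exp ε - 1 := by
    linarith [Real.add_one_le_exp ε, Real.add_one_le_exp (-ε)]
  refine ⟨δ, hδ, ?_⟩
  filter_upwards [hg.abs.eventually (gt_mem_nhds (by simpa using hδ))] with t ht
  constructor
  · intro hge
    have : a * Real.exp ε ≤ b * u t := by
      have := Real.exp_le_exp.2 hge
      rw [Real.exp_add, hab, hexp] at this
      rwa [div_mul_eq_mul_div, div_le_iff₀ hb, mul_comm (u t)] at this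
    nlinarith [neg_abs_le (g t), mul_le_mul_of_nonneg_left hε₁ ha.le]
  · intro hle
    have : b * u t ≤ a * Real.exp (-ε) := by
      have := Real.exp_le_exp.2 hle
      rw [sub_eq_add_neg, Real.exp_add, hab, hexp] at this
      rwa [div_mul_eq_mul_div, le_div_iff₀ hb, mul_comm (u t)] at this
    nlinarith [le_abs_self (g t)]

theorem exists_tendsto_of_tendsto_sq {α : Type*} {l : Filter α} [l.NeBot] {x : α → ℝ}
    {s c : ℝ} (hs : ∀ t, 0 < s * x t) (h : Tendsto (fun t => x t ^ 2) l (𝓝 c)) :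
    ∃ p : ℝ, p ^ 2 = c ∧ Tendsto x l (𝓝 p) := by
  have hc : 0 ≤ c := ge_of_tendsto' h fun t => sq_nonneg (x t)
  have hsqrt : Tendsto (fun t => √(x t ^ 2)) l (𝓝 √c) := (Real.continuous_sqrt.tendsto c).comp h
  rcases lt_or_ge 0 s with hs0 | hs0
  · refine ⟨√c, Real.sq_sqrt hc, hsqrt.congr fun t => ?_⟩
    exact Real.sqrt_sq (pos_of_mul_pos_right (hs t) hs0.le).le
  · refine ⟨-√c, by rw [neg_sq, Real.sq_sqrt hc], hsqrt.neg.congr fun t => ?_⟩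
    rw [← neg_sq, Real.sqrt_sq (neg_nonneg.2 (neg_of_mul_pos_right (hs t) hs0).le), neg_neg]

end Asymptotics

namespace KirkSilber

-- `x` solves the first equation of the system on `Ω₂`, with `y` as the other coordinate;
-- a solution is a pair with `IsSolution η x y` and `IsSolution η y x`.
def IsSolution (η : ℝ) (x y : ℝ → ℝ) : Prop :=
  ∀ t, HasDerivAt x (x t * (1 - x t ^ 2 - (1 + η) * y t ^ 2)) t

def IsSqSolution (η : ℝ) (u v : ℝ → ℝ) : Prop :=
  ∀ t, HasDerivAt u (u t * (2 * (1 - u t - (1 + η) * v t))) t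

section Squared

variable {η : ℝ} {u v : ℝ → ℝ}

theorem hasDerivAt_sub (hu : IsSqSolution η u v) (hv : IsSqSolution η v u) (t : ℝ) :
    HasDerivAt (fun t => u t - v t) ((u t - v t) * (2 * (1 - u t - v t))) t :=
  ((hu t).sub (hv t)).congr_deriv (by ring)

theorem eq_of_apply_zero_eq (hu : IsSqSolution η u v) (hv : IsSqSolution η v u)
    (h0 : u 0 = v 0) (t : ℝ) : u t = v t := by
  have := continuous_of_forall_hasDerivAt hu
  have := continuous_of_forall_hasDerivAt hv
  exact sub_eq_zero.1 <| eq_zero_of_hasDerivAt_mul (by fun_prop) (hasDerivAt_sub hu hv)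
    (sub_eq_zero.2 h0) t

theorem lt_of_apply_zero_lt (hu : IsSqSolution η u v) (hv : IsSqSolution η v u)
    (h0 : v 0 < u 0) (t : ℝ) : v t < u t := by
  have := continuous_of_forall_hasDerivAt hu
  have := continuous_of_forall_hasDerivAt hv
  have := mul_pos_of_hasDerivAt_mul (by fun_prop) (hasDerivAt_sub hu hv) (sub_pos.2 h0).ne' t
  exact sub_pos.1 (pos_of_mul_pos_right this (sub_pos.2 h0).le)

theorem hasDerivAt_log_sub_log (hu : IsSqSolution η u v) (hv : IsSqSolution η v u)
    (hu₀ : ∀ t, 0 < u t) (hv₀ : ∀ t, 0 < v t) (t : ℝ) :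
    HasDerivAt (fun t => Real.log (v t) - Real.log (u t)) (-(2 * η) * (u t - v t)) t := by
  refine (((hv t).log (hv₀ t).ne').sub ((hu t).log (hu₀ t).ne')).congr_deriv ?_
  rw [mul_div_cancel_left₀ _ (hv₀ t).ne', mul_div_cancel_left₀ _ (hu₀ t).ne']
  ring

theorem div_le_div_apply_zero (hη : 0 < η) (hu : IsSqSolution η u v) (hv : IsSqSolution η v u)
    (hu₀ : ∀ t, 0 < u t) (hv₀ : ∀ t, 0 < v t) (h0 : v 0 < u 0) {t : ℝ} (ht : 0 ≤ t) :
    v t / u t ≤ v 0 / u 0 := by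
  have hL := le_of_hasDerivAt_neg_of_eq (hasDerivAt_log_sub_log hu hv hu₀ hv₀) le_rfl
    (fun s _ _ => by nlinarith [lt_of_apply_zero_lt hu hv h0 s]) ht
  rwa [← Real.log_div (hv₀ t).ne' (hu₀ t).ne', ← Real.log_div (hv₀ 0).ne' (hu₀ 0).ne',
    Real.log_le_log_iff (div_pos (hv₀ t) (hu₀ t)) (div_pos (hv₀ 0) (hu₀ 0))] at hL

theorem le_max_apply_zero_one (hη : 0 < η) (hu : IsSqSolution η u v) (hu₀ : ∀ t, 0 < u t)
    (hv₀ : ∀ t, 0 < v t) {t : ℝ} (ht : 0 ≤ t) : u t ≤ max (u 0) 1 := by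
  refine le_of_hasDerivAt_neg_of_eq hu (le_max_left _ _) (fun s _ hs => ?_) ht
  have h1 := le_max_right (u 0) 1
  have : 1 - u s - (1 + η) * v s < 0 := by nlinarith [hv₀ s]
  exact mul_neg_of_pos_of_neg (hu₀ s) (by linarith)

-- Once `v ≤ r u` with `r = v 0 / u 0`, one has `u' ≥ 2u(1 - k u)` with `k = 1 + (1+η) r`.
theorem min_le_apply (hη : 0 < η) (hu : IsSqSolution η u v) (hv : IsSqSolution η v u)
    (hu₀ : ∀ t, 0 < u t) (hv₀ : ∀ t, 0 < v t) (h0 : v 0 < u 0) {t : ℝ} (ht : 0 ≤ t) :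
    min (u 0) (1 / (2 * (1 + (1 + η) * (v 0 / u 0)))) ≤ u t := by
  set k := 1 + (1 + η) * (v 0 / u 0)
  have hk : 0 < k := by have := div_pos (hv₀ 0) (hu₀ 0); positivity
  refine ge_of_hasDerivAt_pos_of_eq hu (min_le_left _ _) (fun s hs hs' => ?_) ht
  have hr : v s ≤ v 0 / u 0 * u s :=
    (div_le_iff₀ (hu₀ s)).1 (div_le_div_apply_zero hη hu hv hu₀ hv₀ h0 hs)
  have hks : k * u s ≤ 1 / 2 := by
    rw [hs']
    calc k * min (u 0) (1 / (2 * k)) ≤ k * (1 / (2 * k)) := by gcongr; exact min_le_right _ _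
      _ = 1 / 2 := by field_simp
  have : 0 < 1 - u s - (1 + η) * v s := by
    have : (1 + η) * v s ≤ (1 + η) * (v 0 / u 0 * u s) := by gcongr
    simp only [k] at hks
    nlinarith
  exact mul_pos (hu₀ s) (by linarith)

theorem tendsto_of_apply_zero_lt (hη : 0 < η) (hu : IsSqSolution η u v)
    (hv : IsSqSolution η v u) (hu₀ : ∀ t, 0 < u t) (hv₀ : ∀ t, 0 < v t) (h0 : v 0 < u 0) :
    Tendsto u atTop (𝓝 1) ∧ Tendsto v atTop (𝓝 0) := by
  set r := v 0 / u 0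
  set m := min (u 0) (1 / (2 * (1 + (1 + η) * r)))
  have hr : r < 1 := (div_lt_one (hu₀ 0)).2 h0
  have hm : 0 < m := lt_min (hu₀ 0) (by have := div_pos (hv₀ 0) (hu₀ 0); positivity)
  have hgap (t : ℝ) (ht : 0 ≤ t) : (1 - r) * m ≤ u t - v t := by
    have h1 := (div_le_iff₀ (hu₀ t)).1 (div_le_div_apply_zero hη hu hv hu₀ hv₀ h0 ht)
    have h2 := min_le_apply hη hu hv hu₀ hv₀ h0 ht
    nlinarith
  have hlog : Tendsto (fun t => Real.log (v t) - Real.log (u t)) atTop atBot :=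
    tendsto_atBot_of_hasDerivAt_le_neg (hasDerivAt_log_sub_log hu hv hu₀ hv₀)
      (δ := 2 * η * ((1 - r) * m)) (by have := sub_pos.2 hr; positivity)
      (eventually_atTop.2 ⟨0, fun t ht => by nlinarith [hgap t ht]⟩)
  have hv_lim : Tendsto v atTop (𝓝 0) := by
    have hlogv : Tendsto (fun t => Real.log (v t)) atTop atBot := by
      refine tendsto_atBot_mono' _ (eventually_atTop.2 ⟨0, fun t ht => ?_⟩)
        (tendsto_atBot_add_const_right _ (Real.log (max (u 0) 1)) hlog)
      have := Real.log_le_log (hu₀ t) (le_max_apply_zero_one hη hu hu₀ hv₀ ht)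
      dsimp only
      linarith
    exact (Real.tendsto_exp_atBot.comp hlogv).congr fun t => Real.exp_log (hv₀ t)
  refine ⟨?_, hv_lim⟩
  have hg : Tendsto (fun t => 2 * (1 + η) * v t) atTop (𝓝 0) := by
    simpa using hv_lim.const_mul (2 * (1 + η))
  simpa using tendsto_of_hasDerivAt_logistic two_pos two_pos hu₀
    (fun t => (hu t).congr_deriv (by ring)) hg

end Squared

section System

variable {η : ℝ} {x y : ℝ → ℝ}

theorem IsSolution.sq (hx : IsSolution η x y) :
    IsSqSolution η (fun t => x t ^ 2) (fun t => y t ^ 2) :=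
  fun t => ((hx t).pow 2).congr_deriv (by ring)

theorem IsSolution.mul_pos (hx : IsSolution η x y) (hy : IsSolution η y x) (h0 : x 0 ≠ 0)
    (t : ℝ) : 0 < x 0 * x t := by
  have := continuous_of_forall_hasDerivAt hx
  have := continuous_of_forall_hasDerivAt hy
  exact mul_pos_of_hasDerivAt_mul (by fun_prop) hx h0 t

theorem exists_tendsto_sink (hη : 0 < η) (hx : IsSolution η x y) (hy : IsSolution η y x)
    (hy0 : y 0 ≠ 0) (hlt : y 0 ^ 2 < x 0 ^ 2) :
    ∃ e : ℝ, e ^ 2 = 1 ∧ Tendsto x atTop (𝓝 e) ∧ Tendsto y atTop (𝓝 0) := by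
  have hx0 : x 0 ≠ 0 := fun h => by nlinarith [h ▸ hlt, sq_nonneg (y 0)]
  have sx := hx.mul_pos hy hx0
  have sy := hy.mul_pos hx hy0
  obtain ⟨hu, hv⟩ := tendsto_of_apply_zero_lt hη hx.sq hy.sq
    (fun t => pow_two_pos_of_ne_zero (right_ne_zero_of_mul (sx t).ne'))
    (fun t => pow_two_pos_of_ne_zero (right_ne_zero_of_mul (sy t).ne')) hlt
  obtain ⟨e, he, hxe⟩ := exists_tendsto_of_tendsto_sq sx hu
  obtain ⟨z, hz, hyz⟩ := exists_tendsto_of_tendsto_sq sy hv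
  exact ⟨e, he, hxe, pow_eq_zero_iff two_ne_zero |>.1 hz ▸ hyz⟩

theorem exists_tendsto_saddle (hη : 0 < 2 + η) (hx : IsSolution η x y) (hy : IsSolution η y x)
    (hx0 : x 0 ≠ 0) (heq : x 0 ^ 2 = y 0 ^ 2) :
    ∃ p : ℝ × ℝ, p.1 ^ 2 = 1 / (2 + η) ∧ p.2 ^ 2 = 1 / (2 + η) ∧
      Tendsto (fun t => (x t, y t)) atTop (𝓝 p) := by
  have hy0 : y 0 ≠ 0 := fun h => hx0 <| pow_eq_zero_iff two_ne_zero |>.1 <| by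
    rw [heq, h, zero_pow two_ne_zero]
  have sx := hx.mul_pos hy hx0
  have sy := hy.mul_pos hx hy0
  have hsq : ∀ t, x t ^ 2 = y t ^ 2 := eq_of_apply_zero_eq hx.sq hy.sq heq
  have hu : Tendsto (fun t => x t ^ 2) atTop (𝓝 (1 / (2 + η))) := by
    have := tendsto_of_hasDerivAt_logistic (g := fun _ => 0) two_pos
      (by positivity : 0 < 2 * (2 + η))
      (fun t => pow_two_pos_of_ne_zero (right_ne_zero_of_mul (sx t).ne'))
      (fun t => (hx.sq t).congr_deriv (by simp only [← hsq t]; ring)) tendsto_const_nhds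
    rwa [div_mul_cancel_left₀ two_ne_zero, ← one_div] at this
  obtain ⟨p₁, hp₁, hxp⟩ := exists_tendsto_of_tendsto_sq sx hu
  obtain ⟨p₂, hp₂, hyp⟩ := exists_tendsto_of_tendsto_sq sy (hu.congr hsq)
  exact ⟨(p₁, p₂), hp₁, hp₂, hxp.prodMk_nhds hyp⟩

end System

end KirkSilber

open KirkSilber in
theorem KS_omega_limits_general (η : ℝ) (hη : 0 < η)
    (x₃ x₄ : ℝ → ℝ)
    (h3 : ∀ t : ℝ, HasDerivAt x₃ (x₃ t * (1 - (x₃ t) ^ 2 - (1 + η) * (x₄ t) ^ 2)) t)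
    (h4 : ∀ t : ℝ, HasDerivAt x₄ (x₄ t * (1 - (x₄ t) ^ 2 - (1 + η) * (x₃ t) ^ 2)) t) :
    (x₃ 0 * x₄ 0 ≠ 0 → (x₃ 0) ^ 2 ≠ (x₄ 0) ^ 2 →
      ∃ p : ℝ × ℝ, ((p.1 ^ 2 = 1 ∧ p.2 = 0) ∨ (p.1 = 0 ∧ p.2 ^ 2 = 1)) ∧
        Tendsto (fun t => (x₃ t, x₄ t)) atTop (nhds p)) ∧
    ((x₃ 0) ^ 2 = (x₄ 0) ^ 2 → (x₃ 0, x₄ 0) ≠ (0, 0) →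
      ∃ p : ℝ × ℝ, p.1 ^ 2 = 1 / (2 + η) ∧ p.2 ^ 2 = 1 / (2 + η) ∧
        Tendsto (fun t => (x₃ t, x₄ t)) atTop (nhds p)) := by
  refine ⟨fun hprod hne => ?_, fun heq hne => ?_⟩
  · obtain ⟨hx₃, hx₄⟩ := mul_ne_zero_iff.1 hprod
    rcases hne.lt_or_gt with h | h
    · obtain ⟨e, he, hx₄e, hx₃0⟩ := exists_tendsto_sink hη h4 h3 hx₃ h
      exact ⟨(0, e), Or.inr ⟨rfl, he⟩, hx₃0.prodMk_nhds hx₄e⟩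
    · obtain ⟨e, he, hx₃e, hx₄0⟩ := exists_tendsto_sink hη h3 h4 hx₄ h
      exact ⟨(e, 0), Or.inl ⟨he, rfl⟩, hx₃e.prodMk_nhds hx₄0⟩
  · have hx₃ : x₃ 0 ≠ 0 := fun h => hne <| Prod.ext h <|
      pow_eq_zero_iff two_ne_zero |>.1 (by rw [← heq, h, zero_pow two_ne_zero])
    exact exists_tendsto_saddle (by linarith) h3 h4 hx₃ heq

/-- For the Kirk–Silber realization restricted to
`Ω₂ = {(0,0,x₃,x₄)}` (`ẋ₃ = x₃(1 − x₃² − (1+η)x₄²)`,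
`ẋ₄ = x₄(1 − x₄² − (1+η)x₃²)`, `η > 0`), every solution with `x₃(0)x₄(0) ≠ 0`
and `x₃(0)² ≠ x₄(0)²` converges to one of the four sinks `(±1,0)`, `(0,±1)`,
while every nonzero solution starting on a diagonal `x₃² = x₄²` converges to one
of the saddles with `x₃² = x₄² = 1/(2+η)`. -/
theorem KS_omega_limits (ε η : ℝ) (hε : 0 < ε) (hε1 : ε < 1) (hη : 0 < η)
    (x₃ x₄ : ℝ → ℝ)
    (h3 : ∀ t : ℝ, HasDerivAt x₃ (x₃ t * (1 - (x₃ t) ^ 2 - (1 + η) * (x₄ t) ^ 2)) t)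
    (h4 : ∀ t : ℝ, HasDerivAt x₄ (x₄ t * (1 - (x₄ t) ^ 2 - (1 + η) * (x₃ t) ^ 2)) t) :
    (x₃ 0 * x₄ 0 ≠ 0 → (x₃ 0) ^ 2 ≠ (x₄ 0) ^ 2 →
      ∃ p : ℝ × ℝ, ((p.1 ^ 2 = 1 ∧ p.2 = 0) ∨ (p.1 = 0 ∧ p.2 ^ 2 = 1)) ∧
        Tendsto (fun t => (x₃ t, x₄ t)) atTop (nhds p)) ∧
    ((x₃ 0) ^ 2 = (x₄ 0) ^ 2 → (x₃ 0, x₄ 0) ≠ (0, 0) →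
      ∃ p : ℝ × ℝ, p.1 ^ 2 = 1 / (2 + η) ∧ p.2 ^ 2 = 1 / (2 + η) ∧
        Tendsto (fun t => (x₃ t, x₄ t)) atTop (nhds p)) :=
  KS_omega_limits_general η hη x₃ x₄ h3 h4
end
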